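/- Let (T, T̄, (-)°, m) be an idealized monad that is completely iterative. Then every weakly inr-guarded morphism f : X → T(Y+X) (i.e., f factoring through [η∘inl, m]* : T(Y + T̄(Y+X)) → T(Y+X)) has a unique solution f† : X → TY, i.e., a unique morphism satisfying f† = [η, f†]* ∘ f. -/

import Mathlib

open CategoryTheory CategoryTheory.Limits

universe v u

/-- `(σ, σ')` form a binary coproduct cospan, i.e. a summand together with its complement. -/
def IsCoprodCospan {C : Type u} [Category.{v} C] {Y' Y'' Y : C}
    (σ : Y' ⟶ Y) (σ' : Y'' ⟶ Y) : Prop :=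
  Nonempty (IsColimit (BinaryCofan.mk σ σ'))

/-- An idealized monad: a monad `(obj, η, bind)` in Kleisli-triple form, together with a
module `(mobj, mlift)` over it and a module-to-monad morphism `m : mobj ⟶ obj`. -/
structure IdealizedMonad (C : Type u) [Category.{v} C] where
  obj : C → C
  η : ∀ X : C, X ⟶ obj X
  bind : ∀ {X Y : C}, (X ⟶ obj Y) → (obj X ⟶ obj Y)
  η_bind : ∀ {X Y : C} (f : X ⟶ obj Y), η X ≫ bind f = f
  bind_η : ∀ X : C, bind (η X) = 𝟙 (obj X)
  bind_comp : ∀ {X Y Z : C} (f : X ⟶ obj Y) (g : Y ⟶ obj Z),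
      bind (f ≫ bind g) = bind f ≫ bind g
  /-- The module carrier. -/
  mobj : C → C
  /-- The module lifting `f ↦ f°`. -/
  mlift : ∀ {X Y : C}, (X ⟶ obj Y) → (mobj X ⟶ mobj Y)
  mlift_η : ∀ X : C, mlift (η X) = 𝟙 (mobj X)
  mlift_comp : ∀ {X Y Z : C} (f : X ⟶ obj Y) (g : Y ⟶ obj Z),
      mlift (f ≫ bind g) = mlift f ≫ mlift g
  /-- The module-to-monad morphism. -/
  m : ∀ X : C, mobj X ⟶ obj X
  m_natural : ∀ {X Y : C} (f : X ⟶ obj Y), mlift f ≫ m Y = m X ≫ bind f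

/-- `f : X ⟶ T Y` is weakly `σ`-guarded for a summand `σ` with complement `σ' : Y' ⟶ Y`
if `f` factors through `[η ∘ σ', m]* : T(Y' + T̄Y) ⟶ TY`. -/
def IdealizedMonad.WeaklyGuarded {C : Type u} [Category.{v} C] [HasBinaryCoproducts C]
    (T : IdealizedMonad C) {X Y' Y : C} (f : X ⟶ T.obj Y) (σ' : Y' ⟶ Y) : Prop :=
  ∃ g : X ⟶ T.obj (Y' ⨿ T.mobj Y),
    f = g ≫ T.bind (coprod.desc (σ' ≫ T.η Y) (T.m Y))

/-- `f : X ⟶ T(Y+Z)` is guarded in the sense of completely iterative monads (extended to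
summand complements `σ'`): it factors through `[η ∘ σ', m] : Y' + T̄ Y ⟶ T Y`. -/
def IdealizedMonad.IdealGuarded {C : Type u} [Category.{v} C] [HasBinaryCoproducts C]
    (T : IdealizedMonad C) {X Y' Y : C} (f : X ⟶ T.obj Y) (σ' : Y' ⟶ Y) : Prop :=
  ∃ g : X ⟶ Y' ⨿ T.mobj Y, f = g ≫ coprod.desc (σ' ≫ T.η Y) (T.m Y)

/-!
Write `f = g ≫ [η ∘ inl, m]*` and let `W = T̄(Y + X)`. The morphism
`F = [η ∘ inl, g]° ≫ m : W ⟶ T(Y + W)` is guarded, and the maps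
`α s = [η, s]° ≫ m` and `β t = g ≫ [η, t]*` exchange candidate solutions of `f` and of `F`:
the equation for `f` reads `s = β (α s)` and the one for `F` reads `t = α (β t)`.
Fixed points of `β ∘ α` and of `α ∘ β` correspond bijectively, so the unique solution of `F`
yields the unique solution of `f`.
-/

theorem Function.existsUnique_eq_comp_swap {α β : Sort*} (f : α → β) (g : β → α)
    (h : ∃! b, b = f (g b)) : ∃! a, a = g (f a) :=
  let ⟨b, hb, hu⟩ := h
  ⟨g b, congrArg g hb, fun a ha => ha.trans (congrArg g (hu (f a) (congrArg f ha)))⟩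

namespace IdealizedMonad

variable {C : Type u} [Category.{v} C] (T : IdealizedMonad C)

theorem mlift_comp_m_comp_bind {X Y Z : C} (u : X ⟶ T.obj Y) (h : Y ⟶ T.obj Z) :
    T.mlift u ≫ T.m Y ≫ T.bind h = T.mlift (u ≫ T.bind h) ≫ T.m Z := by
  rw [← T.m_natural, T.mlift_comp, Category.assoc]

variable [HasBinaryCoproducts C]

theorem idealGuarded_comp_m {X Y' Y : C} (h : X ⟶ T.mobj Y) (σ' : Y' ⟶ Y) :
    T.IdealGuarded (h ≫ T.m Y) σ' :=
  ⟨h ≫ coprod.inr, by rw [Category.assoc, coprod.inr_desc]⟩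

theorem bind_desc_m_comp_bind {Y' Y Z : C} (σ' : Y' ⟶ Y) (h : Y ⟶ T.obj Z) :
    T.bind (coprod.desc (σ' ≫ T.η Y) (T.m Y)) ≫ T.bind h =
      T.bind (coprod.desc (σ' ≫ h) (T.mlift h ≫ T.m Z)) := by
  rw [← T.bind_comp]
  congr 1
  apply coprod.hom_ext
  · rw [coprod.inl_desc_assoc, coprod.inl_desc, Category.assoc, T.η_bind]
  · rw [coprod.inr_desc_assoc, coprod.inr_desc, T.m_natural]

theorem desc_inl_η_comp_bind_desc {X Y Z Z' : C} (g : X ⟶ T.obj (Y ⨿ Z)) (a : Y ⟶ T.obj Z')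
    (b : Z ⟶ T.obj Z') :
    coprod.desc (coprod.inl ≫ T.η (Y ⨿ Z)) g ≫ T.bind (coprod.desc a b) =
      coprod.desc a (g ≫ T.bind (coprod.desc a b)) := by
  apply coprod.hom_ext
  · rw [coprod.inl_desc_assoc, coprod.inl_desc, Category.assoc, T.η_bind, coprod.inl_desc]
  · rw [coprod.inr_desc_assoc, coprod.inr_desc]

end IdealizedMonad

theorem weakly_guarded_unique_solution {C : Type u} [Category.{v} C]
    [HasBinaryCoproducts C] (T : IdealizedMonad C)
    (hci : ∀ (X Y : C) (f : X ⟶ T.obj (Y ⨿ X)),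
      T.IdealGuarded f (coprod.inl : Y ⟶ Y ⨿ X) →
      ∃! s : X ⟶ T.obj Y, s = f ≫ T.bind (coprod.desc (T.η Y) s))
    (X Y : C) (f : X ⟶ T.obj (Y ⨿ X))
    (hf : T.WeaklyGuarded f (coprod.inl : Y ⟶ Y ⨿ X)) :
    ∃! s : X ⟶ T.obj Y, s = f ≫ T.bind (coprod.desc (T.η Y) s) := by
  obtain ⟨g, rfl⟩ := hf
  have hF := hci _ Y _ (T.idealGuarded_comp_m
    (T.mlift (coprod.desc (coprod.inl ≫ T.η _) g)) (coprod.inl : Y ⟶ Y ⨿ _))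
  simp only [Category.assoc, IdealizedMonad.mlift_comp_m_comp_bind,
    IdealizedMonad.desc_inl_η_comp_bind_desc] at hF
  simp only [Category.assoc, IdealizedMonad.bind_desc_m_comp_bind, coprod.inl_desc]
  exact Function.existsUnique_eq_comp_swap (fun s => T.mlift (coprod.desc (T.η Y) s) ≫ T.m Y)
    (fun t => g ≫ T.bind (coprod.desc (T.η Y) t)) hF
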